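/- arXiv:2104.04264 — 4 statements merged into one kernel-verified Lean document; each statement's English description precedes it below -/
import Mathlib

section
/- Let (Ω, F, μ) be a probability space, let R : Ω → ℝ be a random variable, let C, g₀, g₁, g₂, g₃ ∈ ℝ, and define the pricing kernel M := g₀ + g₁(R − C) + g₂(R − C)² + g₃(R − C)³. Assume R, (R − C)^n for n ∈ {1, 2, 3}, R·(R − C)^n for n ∈ {1, 2, 3}, and R·M are integrable, that E[R·M] = 1, and that E[M] ≠ 0. Set R_f := 1 / E[M] and θ_n := −g_n · R_f for n ∈ {1, 2, 3}. Then E[R] − R_f = θ₁·Cov(R, R − C) + θ₂·Cov(R, (R − C)²) + θ₃·Cov(R, (R − C)³). -/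
open MeasureTheory

/-!
The Euler equation `E[R·M] = 1` says `Cov(R, M) = 1 − E[R]·E[M]`, i.e.
`E[R] − R_f = −R_f · Cov(R, M)` with `R_f = 1/E[M]`. Covariance is linear in its second
argument and vanishes on constants, so `Cov(R, M) = ∑ₙ gₙ · Cov(R, (R − C)ⁿ)` for the cubic kernel.
-/

/-- Covariance of two real random variables: `Cov(X, Y) = E[X·Y] − E[X]·E[Y]`. -/
noncomputable def cov {Ω : Type*} {mΩ : MeasurableSpace Ω} (μ : Measure Ω)
    (X Y : Ω → ℝ) : ℝ :=
  (∫ ω, X ω * Y ω ∂μ) - (∫ ω, X ω ∂μ) * ∫ ω, Y ω ∂μ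

section Covariance

variable {Ω : Type*} {mΩ : MeasurableSpace Ω} {μ : Measure Ω}

theorem cov_sum_const_mul_right {ι : Type*} (s : Finset ι) (X : Ω → ℝ) (c : ι → ℝ)
    (Y : ι → Ω → ℝ) (hY : ∀ i ∈ s, Integrable (Y i) μ)
    (hXY : ∀ i ∈ s, Integrable (fun ω => X ω * Y i ω) μ) :
    cov μ X (fun ω => ∑ i ∈ s, c i * Y i ω) = ∑ i ∈ s, c i * cov μ X (Y i) := by
  simp_rw [cov, Finset.mul_sum, mul_left_comm (X _)]
  rw [integral_finsetSum s fun i hi => (hXY i hi).const_mul (c i),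
    integral_finsetSum s fun i hi => (hY i hi).const_mul (c i)]
  simp only [integral_const_mul, Finset.mul_sum, ← Finset.sum_sub_distrib]
  exact Finset.sum_congr rfl fun i _ => by ring

theorem cov_const_add_right [IsProbabilityMeasure μ] (X Y : Ω → ℝ) (a : ℝ)
    (hX : Integrable X μ) (hY : Integrable Y μ) (hXY : Integrable (fun ω => X ω * Y ω) μ) :
    cov μ X (fun ω => a + Y ω) = cov μ X Y := by
  have hXaY : (fun ω => X ω * (a + Y ω)) = fun ω => a * X ω + X ω * Y ω := by
    funext ω; ring
  simp only [cov, hXaY]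
  rw [integral_add (hX.const_mul a) hXY, integral_add (integrable_const a) hY]
  simp only [integral_const_mul, integral_const, probReal_univ, smul_eq_mul, one_mul]
  ring

theorem cov_const_add_sum_const_mul_right [IsProbabilityMeasure μ] {ι : Type*} (s : Finset ι)
    (X : Ω → ℝ) (a : ℝ) (c : ι → ℝ) (Y : ι → Ω → ℝ) (hX : Integrable X μ)
    (hY : ∀ i ∈ s, Integrable (Y i) μ) (hXY : ∀ i ∈ s, Integrable (fun ω => X ω * Y i ω) μ) :
    cov μ X (fun ω => a + ∑ i ∈ s, c i * Y i ω) = ∑ i ∈ s, c i * cov μ X (Y i) := by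
  have hsum : Integrable (fun ω => ∑ i ∈ s, c i * Y i ω) μ :=
    integrable_finsetSum s fun i hi => (hY i hi).const_mul (c i)
  have hXsum : Integrable (fun ω => X ω * ∑ i ∈ s, c i * Y i ω) μ := by
    simp_rw [Finset.mul_sum, mul_left_comm (X _)]
    exact integrable_finsetSum s fun i hi => (hXY i hi).const_mul (c i)
  rw [cov_const_add_right X _ a hX hsum hXsum, cov_sum_const_mul_right s X c Y hY hXY]

theorem integral_sub_one_div_eq_neg_cov_div (X M : Ω → ℝ)
    (hEuler : ∫ ω, X ω * M ω ∂μ = 1) (hM : ∫ ω, M ω ∂μ ≠ 0) :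
    (∫ ω, X ω ∂μ) - 1 / ∫ ω, M ω ∂μ = -(1 / ∫ ω, M ω ∂μ) * cov μ X M := by
  rw [cov, hEuler]
  field_simp
  ring

end Covariance

theorem excess_return_cubic_kernel_general
    {Ω : Type*} {mΩ : MeasurableSpace Ω} {μ : Measure Ω} [IsProbabilityMeasure μ]
    (R M : Ω → ℝ) (C g₀ g₁ g₂ g₃ : ℝ)
    (hMdef : ∀ ω, M ω =
      g₀ + g₁ * (R ω - C) + g₂ * (R ω - C) ^ 2 + g₃ * (R ω - C) ^ 3)
    (hR : Integrable R μ)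
    (hpow : ∀ n, 1 ≤ n → n ≤ 3 → Integrable (fun ω => (R ω - C) ^ n) μ)
    (hRpow : ∀ n, 1 ≤ n → n ≤ 3 → Integrable (fun ω => R ω * (R ω - C) ^ n) μ)
    (hEuler : ∫ ω, R ω * M ω ∂μ = 1)
    (hEM : (∫ ω, M ω ∂μ) ≠ 0)
    (Rf θ₁ θ₂ θ₃ : ℝ)
    (hRf : Rf = 1 / ∫ ω, M ω ∂μ)
    (hθ₁ : θ₁ = -g₁ * Rf) (hθ₂ : θ₂ = -g₂ * Rf) (hθ₃ : θ₃ = -g₃ * Rf) :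
    (∫ ω, R ω ∂μ) - Rf =
      θ₁ * cov μ R (fun ω => R ω - C) +
      θ₂ * cov μ R (fun ω => (R ω - C) ^ 2) +
      θ₃ * cov μ R (fun ω => (R ω - C) ^ 3) := by
  set g : Fin 3 → ℝ := ![g₁, g₂, g₃]
  set P : Fin 3 → Ω → ℝ := fun n ω => (R ω - C) ^ ((n : ℕ) + 1)
  have hM : M = fun ω => g₀ + ∑ n, g n * P n ω := by
    funext ω
    simp [hMdef ω, g, P, Fin.sum_univ_three, add_assoc]
  have hP : ∀ n ∈ Finset.univ, Integrable (P n) μ := fun n _ => hpow _ (by omega) (by omega)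
  have hRP : ∀ n ∈ Finset.univ, Integrable (fun ω => R ω * P n ω) μ :=
    fun n _ => hRpow _ (by omega) (by omega)
  have hcov : cov μ R M = ∑ n, g n * cov μ R (P n) := by
    rw [hM]
    exact cov_const_add_sum_const_mul_right _ R g₀ g P hR hP hRP
  rw [hRf, integral_sub_one_div_eq_neg_cov_div R M hEuler hEM, hcov, hθ₁, hθ₂, hθ₃, hRf]
  simp only [Fin.sum_univ_three, g, P, Matrix.cons_val_zero, Matrix.cons_val_one,
    Matrix.cons_val_two, Matrix.tail_cons, Matrix.head_cons, Fin.val_zero, Fin.val_one,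
    Fin.val_two, zero_add, pow_one]
  ring

/-- For the cubic pricing kernel `M = g₀ + g₁(R − C) + g₂(R − C)² + g₃(R − C)³`, the
Euler equation `E[R·M] = 1` with `R_f = 1/E[M]` and `θ_n = −g_n·R_f` yields
`E[R] − R_f = θ₁·Cov(R, R − C) + θ₂·Cov(R, (R − C)²) + θ₃·Cov(R, (R − C)³)`. -/
theorem excess_return_cubic_kernel
    {Ω : Type*} {mΩ : MeasurableSpace Ω} {μ : Measure Ω} [IsProbabilityMeasure μ]
    (R M : Ω → ℝ) (C g₀ g₁ g₂ g₃ : ℝ)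
    (hMdef : ∀ ω, M ω =
      g₀ + g₁ * (R ω - C) + g₂ * (R ω - C) ^ 2 + g₃ * (R ω - C) ^ 3)
    (hR : Integrable R μ)
    (hpow : ∀ n, 1 ≤ n → n ≤ 3 → Integrable (fun ω => (R ω - C) ^ n) μ)
    (hRpow : ∀ n, 1 ≤ n → n ≤ 3 → Integrable (fun ω => R ω * (R ω - C) ^ n) μ)
    (hRM : Integrable (fun ω => R ω * M ω) μ)
    (hEuler : ∫ ω, R ω * M ω ∂μ = 1)
    (hEM : (∫ ω, M ω ∂μ) ≠ 0)
    (Rf θ₁ θ₂ θ₃ : ℝ)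
    (hRf : Rf = 1 / ∫ ω, M ω ∂μ)
    (hθ₁ : θ₁ = -g₁ * Rf) (hθ₂ : θ₂ = -g₂ * Rf) (hθ₃ : θ₃ = -g₃ * Rf) :
    (∫ ω, R ω ∂μ) - Rf =
      θ₁ * cov μ R (fun ω => R ω - C) +
      θ₂ * cov μ R (fun ω => (R ω - C) ^ 2) +
      θ₃ * cov μ R (fun ω => (R ω - C) ^ 3) :=
  excess_return_cubic_kernel_general (mΩ := mΩ) R M C g₀ g₁ g₂ g₃ hMdef hR hpow hRpow hEuler hEM Rf
    θ₁ θ₂ θ₃ hRf hθ₁ hθ₂ hθ₃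
end

section
/- Let (Ω, F, μ) be a probability space, let R : Ω → ℝ be integrable, set ε := R − E[R], and let g₀, g₁, g₂, g₃ ∈ ℝ define the pricing kernel M := g₀ + g₁·ε + g₂·ε² + g₃·ε³. Assume ε^n for n ∈ {1, 2, 3, 4}, R·ε^n for n ∈ {1, 2, 3}, and R·M are integrable, that E[R·M] = 1, and that E[M] ≠ 0. Set R_f := 1 / E[M] and θ_n := −g_n · R_f for n ∈ {1, 2, 3}. Then E[R] − R_f = θ₁·E[ε²] + θ₂·E[ε³] + θ₃·E[ε⁴]. -/
open MeasureTheory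

/-!
Write `m = E[R]`. Since `R = m + ε`, the Euler equation reads
`1 = E[R·M] = m·E[M] + E[ε·M]`, i.e. `E[R] − R_f = −R_f·E[ε·M]`. Expanding the cubic kernel and
using `E[ε] = 0`, the constant term `g₀` drops out and `E[ε·M] = g₁·E[ε²] + g₂·E[ε³] + g₃·E[ε⁴]`.
-/

section

variable {Ω : Type*} {mΩ : MeasurableSpace Ω} {μ : Measure Ω}

theorem integral_centered_eq_zero [IsProbabilityMeasure μ] {X ε : Ω → ℝ} (hX : Integrable X μ)
    (hε : ∀ ω, ε ω = X ω - ∫ x, X x ∂μ) : ∫ ω, ε ω ∂μ = 0 := by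
  simp only [hε, integral_sub hX (integrable_const _), integral_const, probReal_univ, one_smul,
    sub_self]

theorem integral_mul_eq_integral_mul_integral_add_integral_centered_mul {X ε Y : Ω → ℝ}
    (hε : ∀ ω, ε ω = X ω - ∫ x, X x ∂μ) (hY : Integrable Y μ)
    (hεY : Integrable (fun ω => ε ω * Y ω) μ) :
    ∫ ω, X ω * Y ω ∂μ = (∫ ω, X ω ∂μ) * (∫ ω, Y ω ∂μ) + ∫ ω, ε ω * Y ω ∂μ := by
  have hXY : (fun ω => X ω * Y ω) = fun ω => (∫ x, X x ∂μ) * Y ω + ε ω * Y ω := by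
    funext ω; rw [hε]; ring
  rw [hXY, integral_add (hY.const_mul _) hεY, integral_const_mul]

theorem integrable_cubic [IsFiniteMeasure μ] {X : Ω → ℝ}
    (hX : ∀ n, 1 ≤ n → n ≤ 3 → Integrable (fun ω => X ω ^ n) μ) (a b c d : ℝ) :
    Integrable (fun ω => a + b * X ω + c * X ω ^ 2 + d * X ω ^ 3) μ := by
  have h1 : Integrable X μ := by simpa using hX 1 le_rfl (by norm_num)
  have h2 := hX 2 (by norm_num) (by norm_num)
  have h3 := hX 3 (by norm_num) le_rfl
  fun_prop

theorem mul_cubic_eq (x a b c d : ℝ) :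
    x * (a + b * x + c * x ^ 2 + d * x ^ 3) = a * x + b * x ^ 2 + c * x ^ 3 + d * x ^ 4 := by
  ring

theorem integrable_mul_cubic {X : Ω → ℝ}
    (hX : ∀ n, 1 ≤ n → n ≤ 4 → Integrable (fun ω => X ω ^ n) μ) (a b c d : ℝ) :
    Integrable (fun ω => X ω * (a + b * X ω + c * X ω ^ 2 + d * X ω ^ 3)) μ := by
  have h1 : Integrable X μ := by simpa using hX 1 le_rfl (by norm_num)
  have h2 := hX 2 (by norm_num) (by norm_num)
  have h3 := hX 3 (by norm_num) (by norm_num)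
  have h4 := hX 4 (by norm_num) le_rfl
  simp only [mul_cubic_eq]
  fun_prop

theorem integral_mul_cubic {X : Ω → ℝ}
    (hX : ∀ n, 1 ≤ n → n ≤ 4 → Integrable (fun ω => X ω ^ n) μ) (a b c d : ℝ) :
    ∫ ω, X ω * (a + b * X ω + c * X ω ^ 2 + d * X ω ^ 3) ∂μ =
      a * (∫ ω, X ω ∂μ) + b * (∫ ω, X ω ^ 2 ∂μ) + c * (∫ ω, X ω ^ 3 ∂μ) +
        d * ∫ ω, X ω ^ 4 ∂μ := by
  have h1 : Integrable X μ := by simpa using hX 1 le_rfl (by norm_num)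
  have h2 := hX 2 (by norm_num) (by norm_num)
  have h3 := hX 3 (by norm_num) (by norm_num)
  have h4 := hX 4 (by norm_num) le_rfl
  simp only [mul_cubic_eq]
  rw [integral_add (by fun_prop) (h4.const_mul d), integral_add (by fun_prop) (h3.const_mul c),
    integral_add (h1.const_mul a) (h2.const_mul b)]
  simp only [integral_const_mul]

end

theorem equity_premium_central_moments_general
    {Ω : Type*} {mΩ : MeasurableSpace Ω} {μ : Measure Ω} [IsProbabilityMeasure μ]
    (R : Ω → ℝ) (hR : Integrable R μ)
    (ε : Ω → ℝ) (hε : ∀ ω, ε ω = R ω - ∫ x, R x ∂μ)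
    (M : Ω → ℝ) (g₀ g₁ g₂ g₃ : ℝ)
    (hMdef : ∀ ω, M ω = g₀ + g₁ * ε ω + g₂ * ε ω ^ 2 + g₃ * ε ω ^ 3)
    (hεpow : ∀ n, 1 ≤ n → n ≤ 4 → Integrable (fun ω => ε ω ^ n) μ)
    (hEuler : ∫ ω, R ω * M ω ∂μ = 1)
    (hEM : (∫ ω, M ω ∂μ) ≠ 0)
    (Rf θ₁ θ₂ θ₃ : ℝ)
    (hRf : Rf = 1 / ∫ ω, M ω ∂μ)
    (hθ₁ : θ₁ = -g₁ * Rf) (hθ₂ : θ₂ = -g₂ * Rf) (hθ₃ : θ₃ = -g₃ * Rf) :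
    (∫ ω, R ω ∂μ) - Rf =
      θ₁ * (∫ ω, ε ω ^ 2 ∂μ) +
      θ₂ * (∫ ω, ε ω ^ 3 ∂μ) +
      θ₃ * (∫ ω, ε ω ^ 4 ∂μ) := by
  have hM : M = fun ω => g₀ + g₁ * ε ω + g₂ * ε ω ^ 2 + g₃ * ε ω ^ 3 := funext hMdef
  have hεM : ∫ ω, ε ω * M ω ∂μ =
      g₁ * (∫ ω, ε ω ^ 2 ∂μ) + g₂ * (∫ ω, ε ω ^ 3 ∂μ) + g₃ * ∫ ω, ε ω ^ 4 ∂μ := by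
    rw [hM, integral_mul_cubic hεpow, integral_centered_eq_zero hR hε]
    ring
  have hRM : ∫ ω, R ω * M ω ∂μ = (∫ ω, R ω ∂μ) * (∫ ω, M ω ∂μ) + ∫ ω, ε ω * M ω ∂μ := by
    refine integral_mul_eq_integral_mul_integral_add_integral_centered_mul hε ?_ ?_ <;> rw [hM]
    · exact integrable_cubic (fun n h1 h3 => hεpow n h1 (by omega)) _ _ _ _
    · exact integrable_mul_cubic hεpow _ _ _ _
  rw [hθ₁, hθ₂, hθ₃, hRf]
  field_simp
  linear_combination hRM.symm.trans hEuler - hεM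

/-- For the demeaned return `ε = R − E[R]` and the cubic pricing kernel
`M = g₀ + g₁·ε + g₂·ε² + g₃·ε³`, the Euler equation `E[R·M] = 1` with
`R_f = 1/E[M]` and `θ_n = −g_n·R_f` yields
`E[R] − R_f = θ₁·E[ε²] + θ₂·E[ε³] + θ₃·E[ε⁴]`. -/
theorem equity_premium_central_moments
    {Ω : Type*} {mΩ : MeasurableSpace Ω} {μ : Measure Ω} [IsProbabilityMeasure μ]
    (R : Ω → ℝ) (hR : Integrable R μ)
    (ε : Ω → ℝ) (hε : ∀ ω, ε ω = R ω - ∫ x, R x ∂μ)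
    (M : Ω → ℝ) (g₀ g₁ g₂ g₃ : ℝ)
    (hMdef : ∀ ω, M ω = g₀ + g₁ * ε ω + g₂ * ε ω ^ 2 + g₃ * ε ω ^ 3)
    (hεpow : ∀ n, 1 ≤ n → n ≤ 4 → Integrable (fun ω => ε ω ^ n) μ)
    (hRεpow : ∀ n, 1 ≤ n → n ≤ 3 → Integrable (fun ω => R ω * ε ω ^ n) μ)
    (hRM : Integrable (fun ω => R ω * M ω) μ)
    (hEuler : ∫ ω, R ω * M ω ∂μ = 1)
    (hEM : (∫ ω, M ω ∂μ) ≠ 0)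
    (Rf θ₁ θ₂ θ₃ : ℝ)
    (hRf : Rf = 1 / ∫ ω, M ω ∂μ)
    (hθ₁ : θ₁ = -g₁ * Rf) (hθ₂ : θ₂ = -g₂ * Rf) (hθ₃ : θ₃ = -g₃ * Rf) :
    (∫ ω, R ω ∂μ) - Rf =
      θ₁ * (∫ ω, ε ω ^ 2 ∂μ) +
      θ₂ * (∫ ω, ε ω ^ 3 ∂μ) +
      θ₃ * (∫ ω, ε ω ^ 4 ∂μ) :=
  equity_premium_central_moments_general (mΩ := mΩ) R hR ε hε M g₀ g₁ g₂ g₃ hMdef hεpow hEuler hEM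
    Rf θ₁ θ₂ θ₃ hRf hθ₁ hθ₂ hθ₃
end

section
/- Let (Ω, F, μ) be a probability space, let R : Ω → ℝ be integrable, and set ε := R − E[R]. Suppose ε = ε_s + ε_l for random variables ε_s, ε_l with ε_s · ε_l = 0 almost everywhere. Let n ≥ 1 be a natural number and assume ε_s^{n+1}, ε_l^{n+1}, ε^n, and R·ε^n are integrable. Then Cov(R, ε^n) = E[ε_s^{n+1}] + E[ε_l^{n+1}]. -/
/-! Since `R − E[R] = ε`, `Cov(R, ε^n) = E[ε^(n+1)]`; and wherever `ε_s · ε_l = 0`, one of the two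
vanishes, so `ε^(n+1) = ε_s^(n+1) + ε_l^(n+1)` almost everywhere. -/

open MeasureTheory

theorem Commute.add_pow_of_mul_eq_zero {R : Type*} [Semiring R] {a b : R} (hab : Commute a b)
    (h : a * b = 0) {n : ℕ} (hn : n ≠ 0) : (a + b) ^ n = a ^ n + b ^ n := by
  obtain ⟨m, rfl⟩ := Nat.exists_eq_succ_of_ne_zero hn
  induction m with
  | zero => simp
  | succ m ih =>
    have hab' : a ^ (m + 1) * b = 0 := by rw [pow_succ, mul_assoc, h, mul_zero]
    have hba' : b ^ (m + 1) * a = 0 := by rw [pow_succ, mul_assoc, ← hab.eq, h, mul_zero]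
    rw [pow_succ, ih m.succ_ne_zero, add_mul, mul_add, mul_add, hab', hba', add_zero, zero_add,
      ← pow_succ, ← pow_succ]

section Integral

variable {Ω : Type*} {mΩ : MeasurableSpace Ω} {μ : Measure Ω}

theorem integral_add_pow_of_ae_mul_eq_zero {𝕜 : Type*} [NormedCommRing 𝕜] [NormedSpace ℝ 𝕜]
    {f g : Ω → 𝕜} (hfg : ∀ᵐ ω ∂μ, f ω * g ω = 0) {n : ℕ} (hn : n ≠ 0)
    (hf : Integrable (fun ω => f ω ^ n) μ) (hg : Integrable (fun ω => g ω ^ n) μ) :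
    ∫ ω, (f ω + g ω) ^ n ∂μ = (∫ ω, f ω ^ n ∂μ) + ∫ ω, g ω ^ n ∂μ := by
  have hpow : ∀ᵐ ω ∂μ, (f ω + g ω) ^ n = f ω ^ n + g ω ^ n := by
    filter_upwards [hfg] with ω hω
    exact (Commute.all _ _).add_pow_of_mul_eq_zero hω hn
  rw [integral_congr_ae hpow, integral_add hf hg]

theorem cov_eq_integral_sub_integral_mul {X Y : Ω → ℝ} (hY : Integrable Y μ)
    (hXY : Integrable (fun ω => X ω * Y ω) μ) :
    cov μ X Y = ∫ ω, (X ω - ∫ x, X x ∂μ) * Y ω ∂μ := by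
  simp only [sub_mul]
  rw [integral_sub hXY (hY.const_mul _), integral_const_mul, cov]

end Integral

theorem cov_pow_demeaned_eq_sum_horizon_moments_general
    {Ω : Type*} {mΩ : MeasurableSpace Ω} {μ : Measure Ω}
    (R : Ω → ℝ)
    (ε εs εl : Ω → ℝ)
    (hε : ∀ ω, ε ω = R ω - ∫ x, R x ∂μ)
    (hsplit : ∀ ω, ε ω = εs ω + εl ω)
    (horth : ∀ᵐ ω ∂μ, εs ω * εl ω = 0)
    (n : ℕ)
    (hsn : Integrable (fun ω => εs ω ^ (n + 1)) μ)
    (hln : Integrable (fun ω => εl ω ^ (n + 1)) μ)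
    (hεn : Integrable (fun ω => ε ω ^ n) μ)
    (hRεn : Integrable (fun ω => R ω * ε ω ^ n) μ) :
    cov μ R (fun ω => ε ω ^ n) =
      (∫ ω, εs ω ^ (n + 1) ∂μ) + ∫ ω, εl ω ^ (n + 1) ∂μ := by
  have hmoment : ∀ ω, (R ω - ∫ x, R x ∂μ) * ε ω ^ n = (εs ω + εl ω) ^ (n + 1) := by
    intro ω
    rw [← hε, ← hsplit, pow_succ']
  rw [cov_eq_integral_sub_integral_mul hεn hRεn]
  simp only [hmoment]
  exact integral_add_pow_of_ae_mul_eq_zero horth n.succ_ne_zero hsn hln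

/-- If the demeaned return `ε = R − E[R]` splits as `ε = ε_s + ε_l` with
`ε_s · ε_l = 0` a.e., then for `n ≥ 1`,
`Cov(R, ε^n) = E[ε_s^(n+1)] + E[ε_l^(n+1)]`. -/
theorem cov_pow_demeaned_eq_sum_horizon_moments
    {Ω : Type*} {mΩ : MeasurableSpace Ω} {μ : Measure Ω} [IsProbabilityMeasure μ]
    (R : Ω → ℝ) (hR : Integrable R μ)
    (ε εs εl : Ω → ℝ)
    (hε : ∀ ω, ε ω = R ω - ∫ x, R x ∂μ)
    (hsplit : ∀ ω, ε ω = εs ω + εl ω)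
    (horth : ∀ᵐ ω ∂μ, εs ω * εl ω = 0)
    (n : ℕ) (hn : 1 ≤ n)
    (hsn : Integrable (fun ω => εs ω ^ (n + 1)) μ)
    (hln : Integrable (fun ω => εl ω ^ (n + 1)) μ)
    (hεn : Integrable (fun ω => ε ω ^ n) μ)
    (hRεn : Integrable (fun ω => R ω * ε ω ^ n) μ) :
    cov μ R (fun ω => ε ω ^ n) =
      (∫ ω, εs ω ^ (n + 1) ∂μ) + ∫ ω, εl ω ^ (n + 1) ∂μ :=
  cov_pow_demeaned_eq_sum_horizon_moments_general (mΩ := mΩ) R ε εs εl hε hsplit horth n hsn hln hεn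
    hRεn
end

section
/- (Proposition 1, Pricing of Frequency-Dependent Higher Moments.) Let (Ω, F, μ) be a probability space, let R : Ω → ℝ be integrable, set ε := R − E[R], and suppose ε = ε_s + ε_l for random variables ε_s, ε_l with ε_s · ε_l = 0 almost everywhere. Let g₀, g₁, g₂, g₃ ∈ ℝ define the pricing kernel M := g₀ + g₁·ε + g₂·ε² + g₃·ε³, and assume ε_s^n and ε_l^n for n ∈ {2, 3, 4}, ε^n for n ∈ {1, 2, 3, 4}, R·ε^n for n ∈ {1, 2, 3}, and R·M are integrable, that E[R·M] = 1, and that E[M] ≠ 0. Set R_f := 1 / E[M] and θ_n := −g_n · R_f for n ∈ {1, 2, 3}. Then E[R] − R_f = Σ_{h ∈ {s, l}} ( θ₁·E[ε_h²] + θ₂·E[ε_h³] + θ₃·E[ε_h⁴] ). -/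
/-!
Write `R = E[R] + ε`. The Euler equation then reads `1 = E[R] E[M] + E[ε M]`, so
`E[R] - R_f = -R_f E[ε M]`: the excess return is minus `R_f` times the covariance of the return
with the kernel. As `ε` is centred, `E[ε M] = g₁ E[ε²] + g₂ E[ε³] + g₃ E[ε⁴]`, and since
`ε_s ε_l = 0` almost everywhere each power `ε^n` (`n ≥ 1`) splits as `ε_s^n + ε_l^n`.
-/

open MeasureTheory

theorem add_pow_eq_pow_add_pow_of_mul_eq_zero {R : Type*} [CommSemiring R] {x y : R}
    (h : x * y = 0) {n : ℕ} (hn : n ≠ 0) : (x + y) ^ n = x ^ n + y ^ n := by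
  obtain ⟨k, rfl⟩ := Nat.exists_eq_succ_of_ne_zero hn
  induction k with
  | zero => simp
  | succ k ih =>
    calc (x + y) ^ (k + 1 + 1) = (x ^ (k + 1) + y ^ (k + 1)) * (x + y) := by
          rw [pow_succ, ih k.succ_ne_zero]
      _ = x ^ (k + 1 + 1) + y ^ (k + 1 + 1) + (x ^ k + y ^ k) * (x * y) := by ring
      _ = x ^ (k + 1 + 1) + y ^ (k + 1 + 1) := by rw [h, mul_zero, add_zero]

section
variable {Ω : Type*} {mΩ : MeasurableSpace Ω} {μ : Measure Ω}

theorem integral_add_pow_of_mul_eq_zero {X Y : Ω → ℝ} (hXY : ∀ᵐ ω ∂μ, X ω * Y ω = 0)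
    {n : ℕ} (hn : n ≠ 0) (hX : Integrable (fun ω => X ω ^ n) μ)
    (hY : Integrable (fun ω => Y ω ^ n) μ) :
    ∫ ω, (X ω + Y ω) ^ n ∂μ = ∫ ω, X ω ^ n ∂μ + ∫ ω, Y ω ^ n ∂μ := by
  rw [← integral_add hX hY]
  refine integral_congr_ae ?_
  filter_upwards [hXY] with ω h using add_pow_eq_pow_add_pow_of_mul_eq_zero h hn

theorem sub_one_div_integral_eq_of_integral_mul_eq_one {R M ε : Ω → ℝ} {c : ℝ}
    (hR : ∀ ω, R ω = c + ε ω) (hM : Integrable M μ) (hεM : Integrable (fun ω => ε ω * M ω) μ)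
    (hEuler : ∫ ω, R ω * M ω ∂μ = 1) (hEM : ∫ ω, M ω ∂μ ≠ 0) :
    c - 1 / ∫ ω, M ω ∂μ = -(∫ ω, ε ω * M ω ∂μ) / ∫ ω, M ω ∂μ := by
  have hsplit : ∫ ω, R ω * M ω ∂μ = c * ∫ ω, M ω ∂μ + ∫ ω, ε ω * M ω ∂μ := by
    simp only [hR, add_mul]
    rw [integral_add (hM.const_mul c) hεM, integral_const_mul]
  field_simp
  linear_combination hsplit.symm.trans hEuler

theorem integral_quartic_of_integral_eq_zero {X : Ω → ℝ} (a₁ a₂ a₃ a₄ : ℝ)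
    (hX : ∀ n, 1 ≤ n → n ≤ 4 → Integrable (fun ω => X ω ^ n) μ) (hmean : ∫ ω, X ω ∂μ = 0) :
    ∫ ω, (a₁ * X ω + a₂ * X ω ^ 2 + a₃ * X ω ^ 3 + a₄ * X ω ^ 4) ∂μ =
      a₂ * ∫ ω, X ω ^ 2 ∂μ + a₃ * ∫ ω, X ω ^ 3 ∂μ + a₄ * ∫ ω, X ω ^ 4 ∂μ := by
  have h1 : Integrable X μ := by simpa using hX 1 le_rfl (by norm_num)
  have h2 := hX 2 (by norm_num) (by norm_num)
  have h3 := hX 3 (by norm_num) (by norm_num)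
  have h4 := hX 4 (by norm_num) le_rfl
  rw [integral_add (by fun_prop) (by fun_prop), integral_add (by fun_prop) (by fun_prop),
    integral_add (by fun_prop) (by fun_prop)]
  simp only [integral_const_mul, hmean, mul_zero, zero_add]

end

theorem pricing_frequency_dependent_higher_moments_general
    {Ω : Type*} {mΩ : MeasurableSpace Ω} {μ : Measure Ω} [IsProbabilityMeasure μ]
    (R : Ω → ℝ)
    (ε εs εl : Ω → ℝ)
    (hε : ∀ ω, ε ω = R ω - ∫ x, R x ∂μ)
    (hsplit : ∀ ω, ε ω = εs ω + εl ω)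
    (horth : ∀ᵐ ω ∂μ, εs ω * εl ω = 0)
    (M : Ω → ℝ) (g₀ g₁ g₂ g₃ : ℝ)
    (hMdef : ∀ ω, M ω = g₀ + g₁ * ε ω + g₂ * ε ω ^ 2 + g₃ * ε ω ^ 3)
    (hspow : ∀ n, 2 ≤ n → n ≤ 4 → Integrable (fun ω => εs ω ^ n) μ)
    (hlpow : ∀ n, 2 ≤ n → n ≤ 4 → Integrable (fun ω => εl ω ^ n) μ)
    (hεpow : ∀ n, 1 ≤ n → n ≤ 4 → Integrable (fun ω => ε ω ^ n) μ)
    (hEuler : ∫ ω, R ω * M ω ∂μ = 1)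
    (hEM : (∫ ω, M ω ∂μ) ≠ 0)
    (Rf θ₁ θ₂ θ₃ : ℝ)
    (hRf : Rf = 1 / ∫ ω, M ω ∂μ)
    (hθ₁ : θ₁ = -g₁ * Rf) (hθ₂ : θ₂ = -g₂ * Rf) (hθ₃ : θ₃ = -g₃ * Rf) :
    (∫ ω, R ω ∂μ) - Rf =
      (θ₁ * (∫ ω, εs ω ^ 2 ∂μ) + θ₂ * (∫ ω, εs ω ^ 3 ∂μ) +
        θ₃ * (∫ ω, εs ω ^ 4 ∂μ)) +
      (θ₁ * (∫ ω, εl ω ^ 2 ∂μ) + θ₂ * (∫ ω, εl ω ^ 3 ∂μ) +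
        θ₃ * (∫ ω, εl ω ^ 4 ∂μ)) := by
  have hmean : ∫ ω, ε ω ∂μ = 0 := by
    simpa [ProbabilityTheory.centralMoment, ← funext hε] using
      ProbabilityTheory.centralMoment_one (X := R) (μ := μ)
  have hε1 : Integrable ε μ := by simpa using hεpow 1 le_rfl (by norm_num)
  have hε2 := hεpow 2 (by norm_num) (by norm_num)
  have hε3 := hεpow 3 (by norm_num) (by norm_num)
  have hε4 := hεpow 4 (by norm_num) le_rfl
  have hεM (ω : Ω) :
      ε ω * M ω = g₀ * ε ω + g₁ * ε ω ^ 2 + g₂ * ε ω ^ 3 + g₃ * ε ω ^ 4 := by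
    rw [hMdef]; ring
  have hexcess := sub_one_div_integral_eq_of_integral_mul_eq_one (ε := ε)
    (fun ω => by rw [hε]; ring) (by rw [funext hMdef]; fun_prop) (by simp only [hεM]; fun_prop)
    hEuler hEM
  have hmoment (n : ℕ) (h2 : 2 ≤ n) (h4 : n ≤ 4) :
      ∫ ω, ε ω ^ n ∂μ = ∫ ω, εs ω ^ n ∂μ + ∫ ω, εl ω ^ n ∂μ := by
    simp only [hsplit]
    exact integral_add_pow_of_mul_eq_zero horth (by omega) (hspow n h2 h4) (hlpow n h2 h4)
  rw [funext hεM, integral_quartic_of_integral_eq_zero g₀ g₁ g₂ g₃ hεpow hmean,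
    hmoment 2 le_rfl (by norm_num), hmoment 3 (by norm_num) (by norm_num),
    hmoment 4 (by norm_num) le_rfl] at hexcess
  subst hθ₁ hθ₂ hθ₃ hRf
  rw [hexcess]
  ring

/-- **Proposition 1 (Pricing of Frequency-Dependent Higher Moments).**
With the demeaned return `ε = R − E[R]` split into orthogonal short- and long-run
components `ε = ε_s + ε_l` (with `ε_s·ε_l = 0` a.e.), the cubic pricing kernel
`M = g₀ + g₁·ε + g₂·ε² + g₃·ε³`, the Euler equation `E[R·M] = 1`, `R_f = 1/E[M]`,
and `θ_n = −g_n·R_f`, the excess return satisfies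
`E[R] − R_f = Σ_{h ∈ {s,l}} (θ₁·E[ε_h²] + θ₂·E[ε_h³] + θ₃·E[ε_h⁴])`. -/
theorem pricing_frequency_dependent_higher_moments
    {Ω : Type*} {mΩ : MeasurableSpace Ω} {μ : Measure Ω} [IsProbabilityMeasure μ]
    (R : Ω → ℝ) (hR : Integrable R μ)
    (ε εs εl : Ω → ℝ)
    (hε : ∀ ω, ε ω = R ω - ∫ x, R x ∂μ)
    (hsplit : ∀ ω, ε ω = εs ω + εl ω)
    (horth : ∀ᵐ ω ∂μ, εs ω * εl ω = 0)
    (M : Ω → ℝ) (g₀ g₁ g₂ g₃ : ℝ)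
    (hMdef : ∀ ω, M ω = g₀ + g₁ * ε ω + g₂ * ε ω ^ 2 + g₃ * ε ω ^ 3)
    (hspow : ∀ n, 2 ≤ n → n ≤ 4 → Integrable (fun ω => εs ω ^ n) μ)
    (hlpow : ∀ n, 2 ≤ n → n ≤ 4 → Integrable (fun ω => εl ω ^ n) μ)
    (hεpow : ∀ n, 1 ≤ n → n ≤ 4 → Integrable (fun ω => ε ω ^ n) μ)
    (hRεpow : ∀ n, 1 ≤ n → n ≤ 3 → Integrable (fun ω => R ω * ε ω ^ n) μ)
    (hRM : Integrable (fun ω => R ω * M ω) μ)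
    (hEuler : ∫ ω, R ω * M ω ∂μ = 1)
    (hEM : (∫ ω, M ω ∂μ) ≠ 0)
    (Rf θ₁ θ₂ θ₃ : ℝ)
    (hRf : Rf = 1 / ∫ ω, M ω ∂μ)
    (hθ₁ : θ₁ = -g₁ * Rf) (hθ₂ : θ₂ = -g₂ * Rf) (hθ₃ : θ₃ = -g₃ * Rf) :
    (∫ ω, R ω ∂μ) - Rf =
      (θ₁ * (∫ ω, εs ω ^ 2 ∂μ) + θ₂ * (∫ ω, εs ω ^ 3 ∂μ) +
        θ₃ * (∫ ω, εs ω ^ 4 ∂μ)) +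
      (θ₁ * (∫ ω, εl ω ^ 2 ∂μ) + θ₂ * (∫ ω, εl ω ^ 3 ∂μ) +
        θ₃ * (∫ ω, εl ω ^ 4 ∂μ)) :=
  pricing_frequency_dependent_higher_moments_general (mΩ := mΩ) R ε εs εl hε hsplit horth M g₀ g₁ g₂
    g₃ hMdef hspow hlpow hεpow hEuler hEM Rf θ₁ θ₂ θ₃ hRf hθ₁ hθ₂ hθ₃
end
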